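/- Let b, b̃ ∈ {X,Y,Z}^n be distinct strings and let r := min{ i : b_i ≠ b̃_i } be their first point of disagreement. Define c_r := β_r if 1 ≤ r ≤ n−1 and c_r := α if r = n. Then the trace distance between the corresponding prefix/tree states satisfies the lower bound (1/2)‖ρ_b − ρ_{b̃}‖₁ ≥ |c_r|/2. -/

import Mathlib

/-! The Pauli operator `P := P_b^{(r)}` is a Hermitian unitary, so `‖ρ_b - ρ_b̃‖₁ ≥ |tr((ρ_b - ρ_b̃) P)|`.
Prefix Pauli operators are tensor products of Pauli matrices and identities, and the trace of a
product of two of them vanishes unless they agree factor by factor. Hence only the `r`-th term of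
`ρ_b` survives against `P`, giving `tr(ρ_b P) = c_r`, while every term of `ρ_b̃` is killed: those of
other lengths by a lone Pauli factor, the one of length `r` by the mismatch `b_r ≠ b̃_r`. -/

open Matrix Finset

noncomputable section

/-- The three Pauli matrices `σ_X, σ_Y, σ_Z` as `2 × 2` complex matrices. -/
def pauli : Fin 3 → Matrix (Fin 2) (Fin 2) ℂ :=
  ![!![0, 1; 1, 0], !![0, -Complex.I; Complex.I, 0], !![1, 0; 0, -1]]

/-- The prefix Pauli operator `P_b^{(k)} = (⊗_{i=1}^k σ_{b_i}) ⊗ I^{⊗(n-k)}`, realized as a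
`2^n × 2^n` complex matrix indexed by `Fin n → Fin 2` (the `i`-th tensor factor of the Kronecker
product is `σ_{b_i}` if `i < k` (0-indexed) and the identity otherwise). -/
def prefixPauli (n : ℕ) (b : Fin n → Fin 3) (k : ℕ) :
    Matrix (Fin n → Fin 2) (Fin n → Fin 2) ℂ :=
  Matrix.of fun x y =>
    ∏ i : Fin n,
      (if (i : ℕ) < k then pauli (b i) else (1 : Matrix (Fin 2) (Fin 2) ℂ)) (x i) (y i)

/-- The prefix/tree state `ρ_b = (1/D)(I + ∑_{k=1}^{n-1} β_k P_b^{(k)} + α P_b^{(n)})`,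
with `D = 2^n`. -/
def rhoState (n : ℕ) (b : Fin n → Fin 3) (α : ℝ) (β : ℕ → ℝ) :
    Matrix (Fin n → Fin 2) (Fin n → Fin 2) ℂ :=
  ((2 : ℂ) ^ n)⁻¹ •
    (1 + ∑ k ∈ Finset.Icc 1 (n - 1), (β k : ℂ) • prefixPauli n b k
       + (α : ℂ) • prefixPauli n b n)

/-- The trace norm of a Hermitian matrix: the sum of the absolute values of its (real)
eigenvalues. -/
def traceNorm {d : Type*} [Fintype d] [DecidableEq d] {A : Matrix d d ℂ}
    (hA : A.IsHermitian) : ℝ :=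
  ∑ i, |hA.eigenvalues i|

section PiKronecker

variable {ι R : Type*} [Fintype ι] [CommSemiring R] {m n p : ι → Type*}

def piKronecker (A : ∀ i, Matrix (m i) (n i) R) :
    Matrix (∀ i, m i) (∀ i, n i) R :=
  Matrix.of fun x y => ∏ i, A i (x i) (y i)

theorem piKronecker_mul [DecidableEq ι] [∀ i, Fintype (n i)]
    (A : ∀ i, Matrix (m i) (n i) R) (B : ∀ i, Matrix (n i) (p i) R) :
    piKronecker A * piKronecker B = piKronecker fun i => A i * B i := by
  ext x z
  simp only [piKronecker, mul_apply, of_apply, Fintype.prod_sum, prod_mul_distrib]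

theorem piKronecker_one [∀ i, DecidableEq (m i)] :
    piKronecker (fun i => (1 : Matrix (m i) (m i) R)) = 1 := by
  ext x y
  by_cases h : x = y
  · subst h; simp [piKronecker]
  · obtain ⟨i, hi⟩ := Function.ne_iff.mp h
    simpa [piKronecker, h] using prod_eq_zero (mem_univ i) (by simp [one_apply, hi])

theorem conjTranspose_piKronecker [StarRing R] (A : ∀ i, Matrix (m i) (n i) R) :
    (piKronecker A)ᴴ = piKronecker fun i => (A i)ᴴ := by
  ext x y
  simp [piKronecker, conjTranspose_apply, star_prod]

theorem trace_piKronecker [DecidableEq ι] [∀ i, Fintype (m i)]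
    (A : ∀ i, Matrix (m i) (m i) R) :
    (piKronecker A).trace = ∏ i, (A i).trace := by
  simp only [trace, Matrix.diag, piKronecker, of_apply, Fintype.prod_sum]

end PiKronecker

theorem pauli_mul_self (j : Fin 3) : pauli j * pauli j = 1 := by
  fin_cases j <;> ext i l <;> fin_cases i <;> fin_cases l <;>
    simp [pauli, mul_apply, Fin.sum_univ_two]

theorem isHermitian_pauli (j : Fin 3) : (pauli j).IsHermitian := by
  fin_cases j <;> ext i l <;> fin_cases i <;> fin_cases l <;>
    simp [pauli, conjTranspose_apply]

theorem trace_pauli (j : Fin 3) : (pauli j).trace = 0 := by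
  fin_cases j <;> simp [pauli, trace, Fin.sum_univ_two]

theorem trace_pauli_mul_pauli_of_ne {j j' : Fin 3} (h : j ≠ j') :
    (pauli j * pauli j').trace = 0 := by
  fin_cases j <;> fin_cases j' <;> simp_all [pauli, trace, Fin.sum_univ_two]

def prefixFactor (n : ℕ) (b : Fin n → Fin 3) (k : ℕ) (i : Fin n) : Matrix (Fin 2) (Fin 2) ℂ :=
  if (i : ℕ) < k then pauli (b i) else 1

theorem prefixPauli_eq_piKronecker (n : ℕ) (b : Fin n → Fin 3) (k : ℕ) :
    prefixPauli n b k = piKronecker (prefixFactor n b k) :=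
  rfl

theorem prefixPauli_zero (n : ℕ) (b : Fin n → Fin 3) : prefixPauli n b 0 = 1 := by
  rw [prefixPauli_eq_piKronecker, ← piKronecker_one]
  rfl

theorem isHermitian_prefixPauli (n : ℕ) (b : Fin n → Fin 3) (k : ℕ) :
    (prefixPauli n b k).IsHermitian := by
  rw [IsHermitian, prefixPauli_eq_piKronecker, conjTranspose_piKronecker]
  congr 1
  ext1 i
  unfold prefixFactor
  split_ifs
  exacts [isHermitian_pauli _, conjTranspose_one]

theorem prefixPauli_mul_self (n : ℕ) (b : Fin n → Fin 3) (k : ℕ) :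
    prefixPauli n b k * prefixPauli n b k = 1 := by
  rw [prefixPauli_eq_piKronecker, piKronecker_mul, ← piKronecker_one]
  congr 1
  ext1 i
  unfold prefixFactor
  split_ifs
  exacts [pauli_mul_self _, one_mul 1]

theorem prefixPauli_mem_unitaryGroup (n : ℕ) (b : Fin n → Fin 3) (k : ℕ) :
    prefixPauli n b k ∈ unitaryGroup (Fin n → Fin 2) ℂ := by
  rw [mem_unitaryGroup_iff, star_eq_conjTranspose, (isHermitian_prefixPauli n b k).eq,
    prefixPauli_mul_self]

theorem trace_prefixPauli_mul (n : ℕ) (c b : Fin n → Fin 3) (k r : ℕ) :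
    (prefixPauli n c k * prefixPauli n b r).trace
      = ∏ i, (prefixFactor n c k i * prefixFactor n b r i).trace := by
  rw [prefixPauli_eq_piKronecker, prefixPauli_eq_piKronecker, piKronecker_mul, trace_piKronecker]

theorem trace_prefixPauli_mul_self (n : ℕ) (b : Fin n → Fin 3) (k : ℕ) :
    (prefixPauli n b k * prefixPauli n b k).trace = 2 ^ n := by
  simp [prefixPauli_mul_self]

/-- At position `min k r` exactly one of the two factors is a Pauli matrix. -/
theorem trace_prefixPauli_mul_of_ne (n : ℕ) (c b : Fin n → Fin 3) {k r : ℕ} (hkr : k ≠ r)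
    (hk : k ≤ n) (hr : r ≤ n) :
    (prefixPauli n c k * prefixPauli n b r).trace = 0 := by
  rw [trace_prefixPauli_mul]
  rcases hkr.lt_or_gt with h | h
  · exact prod_eq_zero (mem_univ ⟨k, by omega⟩) (by simp [prefixFactor, h, trace_pauli])
  · exact prod_eq_zero (mem_univ ⟨r, by omega⟩) (by simp [prefixFactor, h, trace_pauli])

theorem trace_prefixPauli_mul_of_apply_ne (n : ℕ) {c b : Fin n → Fin 3} {k : ℕ} {i : Fin n}
    (hi : (i : ℕ) < k) (hcb : c i ≠ b i) :
    (prefixPauli n c k * prefixPauli n b k).trace = 0 := by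
  rw [trace_prefixPauli_mul]
  exact prod_eq_zero (mem_univ i) (by simp [prefixFactor, hi, trace_pauli_mul_pauli_of_ne hcb])

theorem norm_trace_mul_le_traceNorm {d : Type*} [Fintype d] [DecidableEq d] {A U : Matrix d d ℂ}
    (hA : A.IsHermitian) (hU : U ∈ unitaryGroup d ℂ) :
    ‖(A * U).trace‖ ≤ traceNorm hA := by
  set V : Matrix d d ℂ := (hA.eigenvectorUnitary : Matrix d d ℂ)
  set M : Matrix d d ℂ := star V * U * V
  have hM : M ∈ unitaryGroup d ℂ :=
    mul_mem (mul_mem (Unitary.star_mem hA.eigenvectorUnitary.2) hU) hA.eigenvectorUnitary.2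
  have htrace : (A * U).trace = ∑ i, (hA.eigenvalues i : ℂ) * M i i := by
    conv_lhs => rw [hA.spectral_theorem, Unitary.conjStarAlgAut_apply]
    rw [mul_assoc, mul_assoc, trace_mul_comm, mul_assoc, mul_assoc]
    simp [M, V, trace, diagonal_mul, mul_assoc]
  calc ‖(A * U).trace‖ ≤ ∑ i, ‖(hA.eigenvalues i : ℂ) * M i i‖ := htrace ▸ norm_sum_le _ _
    _ ≤ ∑ i, |hA.eigenvalues i| := by
      refine sum_le_sum fun i _ => ?_
      rw [norm_mul, Complex.norm_real, Real.norm_eq_abs]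
      exact mul_le_of_le_one_right (abs_nonneg _) (entry_norm_bound_of_unitary hM i i)

theorem trace_rhoState_mul_prefixPauli (n : ℕ) (c b : Fin n → Fin 3) (α : ℝ) (β : ℕ → ℝ)
    {r : ℕ} (hr1 : 1 ≤ r) (hrn : r ≤ n) :
    (rhoState n c α β * prefixPauli n b r).trace
      = (2 ^ n)⁻¹ * ((if r ≤ n - 1 then β r else α : ℝ) : ℂ)
          * (prefixPauli n c r * prefixPauli n b r).trace := by
  have hvanish : ∀ k ≤ n, k ≠ r → (prefixPauli n c k * prefixPauli n b r).trace = 0 :=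
    fun k hk hkr => trace_prefixPauli_mul_of_ne n c b hkr hk hrn
  have hone : (1 * prefixPauli n b r).trace = 0 := by
    rw [← prefixPauli_zero n c]
    exact hvanish 0 (Nat.zero_le n) (by omega)
  simp only [rhoState, smul_mul_assoc, add_mul, sum_mul, trace_smul, trace_add, trace_sum,
    smul_eq_mul, hone, zero_add]
  split_ifs with hr
  · rw [sum_eq_single_of_mem r (mem_Icc.2 ⟨hr1, hr⟩)
      fun k hk hkr => by rw [hvanish k (by grind) hkr, mul_zero],
      hvanish n le_rfl (by omega)]
    ring
  · obtain rfl : r = n := by omega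
    rw [sum_eq_zero fun k hk => by rw [hvanish k (by grind) (by grind), mul_zero]]
    ring

theorem rhoState_traceDist_lower_general (n : ℕ) (b btil : Fin n → Fin 3)
    (α : ℝ) (β : ℕ → ℝ) (r : ℕ) (hr1 : 1 ≤ r) (hrn : r ≤ n)
    (hdiff : ∀ i : Fin n, (i : ℕ) + 1 = r → b i ≠ btil i)
    (hΔ : (rhoState n b α β - rhoState n btil α β).IsHermitian) :
    |if r ≤ n - 1 then β r else α| / 2 ≤ (1 / 2) * traceNorm hΔ := by
  have hmismatch : (prefixPauli n btil r * prefixPauli n b r).trace = 0 :=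
    trace_prefixPauli_mul_of_apply_ne n (i := ⟨r - 1, by omega⟩) (by simp; omega)
      (hdiff _ (by simp; omega)).symm
  have hpair : ((rhoState n b α β - rhoState n btil α β) * prefixPauli n b r).trace
      = ((if r ≤ n - 1 then β r else α : ℝ) : ℂ) := by
    rw [sub_mul, trace_sub, trace_rhoState_mul_prefixPauli n b b α β hr1 hrn,
      trace_rhoState_mul_prefixPauli n btil b α β hr1 hrn, trace_prefixPauli_mul_self, hmismatch]
    field_simp
    ring
  have hbound := norm_trace_mul_le_traceNorm hΔ (prefixPauli_mem_unitaryGroup n b r)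
  rw [hpair, Complex.norm_real, Real.norm_eq_abs] at hbound
  linarith

/-- Trace-distance lower bound: if the hidden strings of two prefix/tree states first disagree
at the (1-indexed) position `r`, and `c_r := β_r` for `1 ≤ r ≤ n-1` while `c_n := α`, then
`(1/2)‖ρ_b − ρ_{b̃}‖₁ ≥ |c_r|/2`. -/
theorem rhoState_traceDist_lower (n : ℕ) (hn : 1 ≤ n) (b btil : Fin n → Fin 3)
    (α : ℝ) (β : ℕ → ℝ) (r : ℕ) (hr1 : 1 ≤ r) (hrn : r ≤ n)
    (hagree : ∀ i : Fin n, (i : ℕ) + 1 < r → b i = btil i)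
    (hdiff : ∀ i : Fin n, (i : ℕ) + 1 = r → b i ≠ btil i)
    (hΔ : (rhoState n b α β - rhoState n btil α β).IsHermitian) :
    |if r ≤ n - 1 then β r else α| / 2 ≤ (1 / 2) * traceNorm hΔ :=
  rhoState_traceDist_lower_general n b btil α β r hr1 hrn hdiff hΔ

end
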